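/- Let μ be a partition of n with distinct parts, let t be a μ-tableau, and let π ∈ S_n be an m-involution (m ≥ 1) such that ⟨π·e_t, e_t⟩ is odd. Then m ≤ (n − ℓ_o(μ))/2, and for every column index c the permutation π fixes at most one element of the column set {t(r,c) : 1 ≤ r ≤ ℓ with c ≤ μ_r}. -/

import Mathlib

noncomputable section
open scoped Classical

/-- The cells of the Young diagram of a partition `μ` (given as a list of parts):
pairs of a row index `r` and a column index `c < μ_r`. -/
abbrev YoungCell (μ : List ℕ) := (r : Fin μ.length) × Fin (μ.get r)

/-- A `μ`-tableau: a bijective filling of the Young diagram of `μ` with the symbols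
`1, …, n` (here: the elements of `Fin n`). -/
abbrev YoungTableau (n : ℕ) (μ : List ℕ) := YoungCell μ ≃ Fin n

/-- A family of rows is a `μ`-tabloid: row `r` has `μ_r` elements, the rows are pairwise
disjoint and cover `{1, …, n}`. -/
def IsTabloid (n : ℕ) (μ : List ℕ) (R : Fin μ.length → Finset (Fin n)) : Prop :=
  (∀ r, (R r).card = μ.get r) ∧
  (∀ r s, r ≠ s → Disjoint (R r) (R s)) ∧
  (∀ i, ∃ r, i ∈ R r)

/-- A `μ`-tabloid: an ordered partition of `{1, …, n}` with block sizes `μ₁, …, μ_ℓ`. -/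
def Tabloid (n : ℕ) (μ : List ℕ) := {R : Fin μ.length → Finset (Fin n) // IsTabloid n μ R}

variable {n : ℕ} {μ : List ℕ}

/-- The action of a permutation on a tabloid, applying it to each row. -/
def permTabloid (π : Equiv.Perm (Fin n)) (R : Tabloid n μ) : Tabloid n μ :=
  ⟨fun r => (R.1 r).image π, by
    obtain ⟨h1, h2, h3⟩ := R.2
    refine ⟨fun r => ?_, fun r s hrs => ?_, fun i => ?_⟩
    · rw [Finset.card_image_of_injective _ π.injective, h1 r]
    · exact (Finset.disjoint_image π.injective).mpr (h2 r s hrs)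
    · obtain ⟨r, hr⟩ := h3 (π⁻¹ i)
      exact ⟨r, Finset.mem_image.mpr ⟨π⁻¹ i, hr, by simp⟩⟩⟩

/-- The action of a permutation on a tableau (postcomposition). -/
def permTableau (π : Equiv.Perm (Fin n)) (t : YoungTableau n μ) : YoungTableau n μ :=
  t.trans π

/-- The tabloid `{t}` determined by a tableau `t`: its `r`-th row is the set of entries
in the `r`-th row of `t`. -/
def tabloidOf (t : YoungTableau n μ) : Tabloid n μ :=
  ⟨fun r => Finset.univ.image fun c : Fin (μ.get r) => t ⟨r, c⟩, by
    refine ⟨fun r => ?_, fun r s hrs => ?_, fun i => ?_⟩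
    · rw [Finset.card_image_of_injective, Finset.card_univ, Fintype.card_fin]
      intro c₁ c₂ h
      have := t.injective h
      exact (Sigma.mk.inj_iff.mp this).2.eq
    · rw [Finset.disjoint_left]
      rintro a ha hb
      obtain ⟨c₁, -, h₁⟩ := Finset.mem_image.mp ha
      obtain ⟨c₂, -, h₂⟩ := Finset.mem_image.mp hb
      have := t.injective (h₁.trans h₂.symm)
      exact hrs (Sigma.mk.inj_iff.mp this).1
    · refine ⟨(t.symm i).1,
        Finset.mem_image.mpr ⟨(t.symm i).2, Finset.mem_univ _, ?_⟩⟩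
      exact t.apply_symm_apply i⟩

/-- The (index of the) row of a tableau containing a given symbol. -/
def rowIdx (t : YoungTableau n μ) (i : Fin n) : ℕ :=
  ((t.symm i).1 : ℕ)

/-- The (index of the) column of a tableau containing a given symbol. -/
def colIdx (t : YoungTableau n μ) (i : Fin n) : ℕ :=
  ((t.symm i).2 : ℕ)

/-- The column stabilizer `C_t` of a tableau: the permutations preserving each column. -/
def colStab (t : YoungTableau n μ) : Finset (Equiv.Perm (Fin n)) :=
  Finset.univ.filter fun σ => ∀ i, colIdx t (σ i) = colIdx t i

/-- Membership in the row stabilizer `R_t` of a tableau. -/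
def memRowStab (t : YoungTableau n μ) (π : Equiv.Perm (Fin n)) : Prop :=
  ∀ i, rowIdx t (π i) = rowIdx t i

/-- The polytabloid `e_t = Σ_{σ ∈ C_t} sgn(σ)·{σt}` of a tableau `t`, an element of the
free `ℤ`-module `M^μ` on the `μ`-tabloids. -/
def polytabloid (t : YoungTableau n μ) : Tabloid n μ →₀ ℤ :=
  ∑ σ ∈ colStab t, ((Equiv.Perm.sign σ : ℤˣ) : ℤ) • Finsupp.single (tabloidOf (permTableau σ t)) 1

/-- The symmetric bilinear form on `M^μ` making the tabloids orthonormal. -/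
def tabForm (x y : Tabloid n μ →₀ ℤ) : ℤ :=
  x.sum fun T a => a * y T

/-- The action of a permutation on `M^μ`, permuting the tabloid basis. -/
def permMap (π : Equiv.Perm (Fin n)) (x : Tabloid n μ →₀ ℤ) : Tabloid n μ →₀ ℤ :=
  Finsupp.mapDomain (permTabloid π) x

/-- `supp(t)`: the set of tabloids `{σt}` for `σ ∈ C_t`. -/
def tabSupp (t : YoungTableau n μ) : Finset (Tabloid n μ) :=
  (colStab t).image fun σ => tabloidOf (permTableau σ t)

/-!
Modulo 2 the signs in `⟨π e_t, e_t⟩` disappear, so it counts the pairs `(σ, τ) ∈ C_t × C_t`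
with `{τt} = π{σt}`; this count is odd. If `π` fixes two entries `i ≠ j` of a column, then
`s = (i j) ∈ C_t` commutes with `π` and `(σ, τ) ↦ (sσ, sτ)` is a fixed-point-free involution of
these pairs, which would make their number even. Since `π` is an involution, so is
`(σ, τ) ↦ (τ, σ)`, and oddness gives a fixed point: a tabloid `{σt}` fixed by `π`. Then `π`
permutes each row of `{σt}` and moves an even number of its entries, so at most `μ_r - 1` of an
odd row; summing over the rows gives `2m ≤ n - ℓ_o(μ)`.
-/

open Finset

theorem Finset.exists_apply_eq_self_of_odd_card {α : Type*} {s : Finset α} {g : α → α}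
    (hmaps : ∀ a ∈ s, g a ∈ s) (hinv : ∀ a ∈ s, g (g a) = a) (hodd : Odd #s) :
    ∃ a ∈ s, g a = a := by
  by_contra! hfree
  have : ∑ _a ∈ s, (1 : ZMod 2) = 0 :=
    sum_involution (fun a _ => g a) (fun _ _ => by decide) (fun a ha _ => hfree a ha) hmaps hinv
  rw [sum_const, nsmul_one, ZMod.natCast_eq_zero_iff_even] at this
  exact Nat.not_even_iff_odd.mpr hodd this

theorem Equiv.Perm.even_card_inter_support {α : Type*} [DecidableEq α] [Fintype α]
    {π : Equiv.Perm α} (hπ : π ^ 2 = 1) {s : Finset α} (hs : s.image π = s) :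
    Even #(s ∩ π.support) := by
  by_contra hodd
  obtain ⟨a, ha, hfix⟩ := exists_apply_eq_self_of_odd_card (s := s ∩ π.support) (g := π)
    (fun a ha => by
      rw [mem_inter] at ha ⊢
      exact ⟨hs ▸ mem_image_of_mem π ha.1, Equiv.Perm.apply_mem_support.mpr ha.2⟩)
    (fun a _ => by rw [← Equiv.Perm.mul_apply, ← sq, hπ, Equiv.Perm.one_apply])
    (Nat.not_even_iff_odd.mp hodd)
  exact Equiv.Perm.mem_support.mp (mem_inter.mp ha).2 hfix

theorem List.length_filter_eq_card {α : Type*} (l : List α) (p : α → Bool) :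
    (l.filter p).length = #{i : Fin l.length | p l[i]} := by
  rw [card_filter]
  simp only [Fin.getElem_fin]
  rw [Fin.sum_univ_fun_getElem l fun x => if p x = true then 1 else 0]
  induction l with
  | nil => rfl
  | cons a l ih => by_cases h : p a <;> simp [h, ih, add_comm]

theorem Int.cast_units_zmod_two (u : ℤˣ) : ((u : ℤ) : ZMod 2) = 1 := by
  rcases Int.units_eq_one_or u with rfl | rfl <;> decide

namespace Tabloid

theorem ext {R S : Tabloid n μ} (h : ∀ r, R.1 r = S.1 r) : R = S :=
  Subtype.ext (funext h)

theorem sum_card_inter (R : Tabloid n μ) (s : Finset (Fin n)) : ∑ r, #(R.1 r ∩ s) = #s := by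
  obtain ⟨-, hdisj, hcover⟩ := R.2
  rw [← card_biUnion fun r _ q _ hrq =>
    (hdisj r q hrq).mono inter_subset_left inter_subset_left]
  congr 1
  ext a
  simp only [mem_biUnion, mem_univ, true_and, mem_inter]
  exact ⟨fun ⟨_, _, ha⟩ => ha, fun ha => (hcover a).imp fun _ hr => ⟨hr, ha⟩⟩

theorem sum_get (R : Tabloid n μ) : ∑ r, μ.get r = n := by
  simpa [inter_univ, R.2.1] using R.sum_card_inter univ

theorem card_support_add_length_filter_odd_le (R : Tabloid n μ) {π : Equiv.Perm (Fin n)}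
    (hπ : π ^ 2 = 1) (hR : permTabloid π R = R) :
    #π.support + (μ.filter fun i => Odd i).length ≤ n := by
  have hrow (r : Fin μ.length) :
      #(R.1 r ∩ π.support) + (if Odd (μ.get r) then 1 else 0) ≤ μ.get r := by
    have heven := π.even_card_inter_support hπ (congrArg (·.1 r) hR)
    have hle : #(R.1 r ∩ π.support) ≤ μ.get r := R.2.1 r ▸ card_le_card inter_subset_left
    split_ifs with hodd
    · rcases heven with ⟨a, ha⟩
      rcases hodd with ⟨b, hb⟩
      omega
    · omega
  calc #π.support + (μ.filter fun i => Odd i).length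
      = ∑ r, (#(R.1 r ∩ π.support) + if Odd (μ.get r) then 1 else 0) := by
        rw [sum_add_distrib, R.sum_card_inter, List.length_filter_eq_card, card_filter]
        simp [List.get_eq_getElem]
    _ ≤ ∑ r, μ.get r := sum_le_sum fun r _ => hrow r
    _ = n := R.sum_get

end Tabloid

theorem permTabloid_mul (g h : Equiv.Perm (Fin n)) (R : Tabloid n μ) :
    permTabloid (g * h) R = permTabloid g (permTabloid h R) :=
  Tabloid.ext fun r => by simp [permTabloid, image_image, Function.comp_def]

theorem permTabloid_one (R : Tabloid n μ) : permTabloid 1 R = R :=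
  Tabloid.ext fun r => by simp [permTabloid]

theorem permTableau_mul (g h : Equiv.Perm (Fin n)) (u : YoungTableau n μ) :
    permTableau (g * h) u = permTableau g (permTableau h u) :=
  rfl

theorem tabloidOf_permTableau (g : Equiv.Perm (Fin n)) (u : YoungTableau n μ) :
    tabloidOf (permTableau g u) = permTabloid g (tabloidOf u) :=
  Tabloid.ext fun r => by simp [tabloidOf, permTableau, permTabloid, image_image]; rfl

theorem mul_mem_colStab {t : YoungTableau n μ} {σ τ : Equiv.Perm (Fin n)}
    (hσ : σ ∈ colStab t) (hτ : τ ∈ colStab t) : σ * τ ∈ colStab t := by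
  simp only [colStab, mem_filter, mem_univ, true_and, Equiv.Perm.mul_apply] at *
  exact fun i => (hσ _).trans (hτ i)

theorem swap_mem_colStab {t : YoungTableau n μ} {i j : Fin n} (h : colIdx t i = colIdx t j) :
    Equiv.swap i j ∈ colStab t := by
  simp only [colStab, mem_filter, mem_univ, true_and]
  intro k
  rcases eq_or_ne k i with rfl | hki
  · rw [Equiv.swap_apply_left, h]
  rcases eq_or_ne k j with rfl | hkj
  · rw [Equiv.swap_apply_right, h]
  · rw [Equiv.swap_apply_of_ne_of_ne hki hkj]

theorem tabForm_sum_smul_single {ι : Type*} (s : Finset ι) (c : ι → ℤ) (U : ι → Tabloid n μ)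
    (y : Tabloid n μ →₀ ℤ) :
    tabForm (∑ i ∈ s, c i • Finsupp.single (U i) 1) y = ∑ i ∈ s, c i * y (U i) := by
  rw [tabForm, ← Finsupp.sum_finsetSum_index (fun _ => zero_mul _) (fun _ _ _ => add_mul _ _ _)]
  refine sum_congr rfl fun i _ => ?_
  rw [Finsupp.smul_single', mul_one, Finsupp.sum_single_index (zero_mul _)]

theorem permMap_polytabloid (π : Equiv.Perm (Fin n)) (t : YoungTableau n μ) :
    permMap π (polytabloid t) = ∑ σ ∈ colStab t, ((Equiv.Perm.sign σ : ℤˣ) : ℤ) •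
      Finsupp.single (permTabloid π (tabloidOf (permTableau σ t))) 1 := by
  simp only [permMap, polytabloid, Finsupp.mapDomain_finsetSum, Finsupp.mapDomain_smul,
    Finsupp.mapDomain_single]

theorem polytabloid_apply (t : YoungTableau n μ) (T : Tabloid n μ) :
    polytabloid t T = ∑ τ ∈ colStab t,
      ((Equiv.Perm.sign τ : ℤˣ) : ℤ) * if tabloidOf (permTableau τ t) = T then 1 else 0 := by
  simp only [polytabloid, Finsupp.finsetSum_apply, Finsupp.smul_apply, Finsupp.single_apply,
    smul_eq_mul]

def matchingPairs (t : YoungTableau n μ) (π : Equiv.Perm (Fin n)) :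
    Finset (Equiv.Perm (Fin n) × Equiv.Perm (Fin n)) :=
  (colStab t ×ˢ colStab t).filter fun p =>
    tabloidOf (permTableau p.2 t) = permTabloid π (tabloidOf (permTableau p.1 t))

theorem mem_matchingPairs {t : YoungTableau n μ} {π : Equiv.Perm (Fin n)}
    {p : Equiv.Perm (Fin n) × Equiv.Perm (Fin n)} :
    p ∈ matchingPairs t π ↔ p.1 ∈ colStab t ∧ p.2 ∈ colStab t ∧
      tabloidOf (permTableau p.2 t) = permTabloid π (tabloidOf (permTableau p.1 t)) := by
  rw [matchingPairs, mem_filter, mem_product, and_assoc]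

theorem cast_tabForm_permMap_polytabloid (t : YoungTableau n μ) (π : Equiv.Perm (Fin n)) :
    ((tabForm (permMap π (polytabloid t)) (polytabloid t) : ℤ) : ZMod 2) =
      #(matchingPairs t π) := by
  simp only [permMap_polytabloid, tabForm_sum_smul_single, polytabloid_apply, mul_sum]
  push_cast
  simp only [Int.cast_units_zmod_two, one_mul]
  rw [← sum_product', sum_boole, matchingPairs]

theorem exists_permTabloid_eq_self_of_odd_card {t : YoungTableau n μ} {π : Equiv.Perm (Fin n)}
    (hπ : π ^ 2 = 1) (hodd : Odd #(matchingPairs t π)) :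
    ∃ σ ∈ colStab t, permTabloid π (tabloidOf (permTableau σ t)) = tabloidOf (permTableau σ t) := by
  obtain ⟨⟨σ, τ⟩, hp, hfix⟩ := exists_apply_eq_self_of_odd_card (g := Prod.swap)
    (fun p hp => by
      obtain ⟨h₁, h₂, h₃⟩ := mem_matchingPairs.mp hp
      refine mem_matchingPairs.mpr ⟨h₂, h₁, ?_⟩
      rw [Prod.fst_swap, Prod.snd_swap, h₃, ← permTabloid_mul, ← sq, hπ, permTabloid_one])
    (fun p _ => p.swap_swap) hodd
  obtain rfl : σ = τ := congrArg Prod.snd hfix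
  exact ⟨σ, (mem_matchingPairs.mp hp).1, (mem_matchingPairs.mp hp).2.2.symm⟩

theorem eq_of_odd_card_matchingPairs {t : YoungTableau n μ} {π : Equiv.Perm (Fin n)}
    (hodd : Odd #(matchingPairs t π)) {i j : Fin n} (hcol : colIdx t i = colIdx t j)
    (hi : π i = i) (hj : π j = j) : i = j := by
  set s := Equiv.swap i j
  have hsπ : π * s = s * π := by
    rw [← mul_inv_eq_iff_eq_mul, ← Equiv.swap_apply_apply, hi, hj]
  obtain ⟨p, hp, hfix⟩ := exists_apply_eq_self_of_odd_card (g := fun p => (s * p.1, s * p.2))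
    (fun p hp => by
      obtain ⟨h₁, h₂, h₃⟩ := mem_matchingPairs.mp hp
      have hs := swap_mem_colStab hcol
      refine mem_matchingPairs.mpr ⟨mul_mem_colStab hs h₁, mul_mem_colStab hs h₂, ?_⟩
      rw [permTableau_mul, permTableau_mul, tabloidOf_permTableau s, tabloidOf_permTableau s, h₃,
        ← permTabloid_mul, ← permTabloid_mul, hsπ])
    (fun p _ => by simp only [s, ← mul_assoc, Equiv.swap_mul_self, one_mul])
    hodd
  exact Equiv.swap_eq_one_iff.mp
    (mul_right_cancel ((congrArg Prod.fst hfix).trans (one_mul p.1).symm))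

theorem of_odd_tabForm_upper_bound_general
    (t : YoungTableau n μ) (m : ℕ) (π : Equiv.Perm (Fin n))
    (hπ : π.cycleType = Multiset.replicate m 2)
    (hodd : Odd (tabForm (permMap π (polytabloid t)) (polytabloid t))) :
    (m : ℚ) ≤ ((n : ℚ) - (μ.filter fun i => Odd i).length) / 2 ∧
    ∀ c : ℕ, ∀ i j : Fin n, colIdx t i = c → colIdx t j = c →
      π i = i → π j = j → i = j := by
  have hπ2 : π ^ 2 = 1 :=
    Equiv.Perm.pow_prime_eq_one_iff.mpr fun c hc => Multiset.eq_of_mem_replicate (hπ ▸ hc)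
  have hpairs : Odd #(matchingPairs t π) := by
    rw [← ZMod.natCast_eq_one_iff_odd, ← cast_tabForm_permMap_polytabloid]
    exact hodd.intCast_zmod_two
  refine ⟨?_, fun _ i j hi hj => eq_of_odd_card_matchingPairs hpairs (hi.trans hj.symm)⟩
  obtain ⟨σ, -, hσ⟩ := exists_permTabloid_eq_self_of_odd_card hπ2 hpairs
  have hsupp : #π.support = 2 * m := by
    rw [← Equiv.Perm.sum_cycleType, hπ, Multiset.sum_replicate, smul_eq_mul, mul_comm]
  have hcount := (tabloidOf (permTableau σ t)).card_support_add_length_filter_odd_le hπ2 hσ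
  rw [hsupp] at hcount
  rw [le_div_iff₀ two_pos, le_sub_iff_add_le]
  exact_mod_cast (by omega : m * 2 + (μ.filter fun i => Odd i).length ≤ n)

/-- Let `μ` be a partition of `n` with distinct parts, `t` a `μ`-tableau and `π ∈ S_n` an
`m`-involution (`m ≥ 1`) with `⟨π·e_t, e_t⟩` odd.  Then `m ≤ (n − ℓ_o(μ))/2`, and `π`
fixes at most one entry in each column of `t`. -/
theorem of_odd_tabForm_upper_bound
    (hpos : ∀ i ∈ μ, 0 < i) (hdist : μ.Chain' (· > ·)) (hsum : μ.sum = n)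
    (t : YoungTableau n μ) (m : ℕ) (hm : 1 ≤ m) (π : Equiv.Perm (Fin n))
    (hπ : π.cycleType = Multiset.replicate m 2)
    (hodd : Odd (tabForm (permMap π (polytabloid t)) (polytabloid t))) :
    (m : ℚ) ≤ ((n : ℚ) - (μ.filter fun i => Odd i).length) / 2 ∧
    ∀ c : ℕ, ∀ i j : Fin n, colIdx t i = c → colIdx t j = c →
      π i = i → π j = j → i = j :=
  of_odd_tabForm_upper_bound_general t m π hπ hodd

end
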